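/- Let (N,v) be a simple monotone game, let S ⊂ N with |S| ≥ 2, let q_S be any probability distribution over the subsets of N\S and let p_S be a strictly positive probability distribution over Π₂(S). Then the coopetition index C_{p,q}(S) equals −1 if and only if every player i ∈ S is critical with respect to every T ⊆ N\S such that q_S(T) > 0. -/
import Mathlib


open Finset

variable {α : Type*} [DecidableEq α]

/-- A simple monotone game on the player set `N`: `v` maps coalitions to `{0,1}`,
`v ∅ = 0`, `v N = 1`, and `v` is monotone on subsets of `N`. -/
structure SimpleGame (N : Finset α) (v : Finset α → ℝ) : Prop where
  empty : v ∅ = 0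
  full : v N = 1
  mono : ∀ ⦃S T : Finset α⦄, S ⊆ T → T ⊆ N → v S ≤ v T
  binary : ∀ S ⊆ N, v S = 0 ∨ v S = 1

/-- Block interaction indicator `BI v {S₁,S₂} T = v(S₁∪S₂∪T) − v(S₁∪T) − v(S₂∪T) + v(T)`. -/
noncomputable def BI (v : Finset α → ℝ) (π : Sym2 (Finset α)) (T : Finset α) : ℝ :=
  Sym2.lift ⟨fun A B => v (A ∪ B ∪ T) - v (A ∪ T) - v (B ∪ T) + v T,
    fun A B => by simp only []; rw [Finset.union_comm A B]; ring⟩ π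

/-- `Π₂(S)`: the set of unordered partitions of `S` into two nonempty parts. -/
def Pi2 (S : Finset α) : Finset (Sym2 (Finset α)) :=
  (S.powerset.filter fun Q => Q ≠ ∅ ∧ Q ≠ S).image fun Q => s(Q, S \ Q)

/-- `S` is critical with respect to `T`: `v(S∪T) − v(T) = 1`. -/
def Critical (v : Finset α → ℝ) (S T : Finset α) : Prop := v (S ∪ T) - v T = 1

/-- `S` is essential critical with respect to `T`: `S` is critical wrt `T` and no
proper nonempty subset of `S` is critical wrt `T`. -/
def EssentialCritical (v : Finset α → ℝ) (S T : Finset α) : Prop :=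
  Critical v S T ∧ ∀ S' : Finset α, S' ⊂ S → S'.Nonempty → ¬ Critical v S' T

/-- The attitude `A_p(S,T)` of `S` towards `T` under the distribution `p` on `Π₂(S)`. -/
noncomputable def attitude (v : Finset α → ℝ) (p : Sym2 (Finset α) → ℝ)
    (S T : Finset α) : ℝ :=
  ∑ π ∈ Pi2 S, p π * BI v π T

/-- The coopetition index `C_{p,q}(S)`. -/
noncomputable def coop (N : Finset α) (v : Finset α → ℝ)
    (p : Sym2 (Finset α) → ℝ) (q : Finset α → ℝ) (S : Finset α) : ℝ :=
  ∑ T ∈ (N \ S).powerset, q T * attitude v p S T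

/-- `Σ_S(N)`: orderings of `N` (as lists) in which the elements of `S` occupy
consecutive positions. -/
noncomputable def SigmaOrd (N S : Finset α) : Finset (List α) := by
  classical
  exact N.toList.permutations.toFinset.filter
    fun l => ∃ k ∈ Finset.range (l.length + 1), ((l.drop k).take S.card).toFinset = S

/-- Sequential attitude `AS(S,σ)` of `S` towards the ordering `l`:
the average over `k = 1, …, s−1` of the block interaction between the first `k` and the
last `s−k` elements of the block of `S` in `l`, against the predecessors of `S` in `l`. -/
noncomputable def seqAttitude (v : Finset α → ℝ) (S : Finset α) (l : List α) : ℝ :=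
  (1 / ((S.card : ℝ) - 1)) * ∑ k ∈ Finset.Icc 1 (S.card - 1),
    BI v (s((((l.dropWhile fun x => decide (x ∉ S)).take S.card).take k).toFinset,
            (((l.dropWhile fun x => decide (x ∉ S)).take S.card).drop k).toFinset))
      (l.takeWhile fun x => decide (x ∉ S)).toFinset

/-- Shapley-Owen coopetition index defined through orderings. -/
noncomputable def C_SO_ord (N : Finset α) (v : Finset α → ℝ) (S : Finset α) : ℝ :=
  (1 / ((SigmaOrd N S).card : ℝ)) * ∑ l ∈ SigmaOrd N S, seqAttitude v S l

/-- Shapley-Owen weight on partitions `{Q, S\Q}`: `2·q!·(s−q)!/((s−1)·s!)`. -/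
noncomputable def soWeight (S : Finset α) : Sym2 (Finset α) → ℝ :=
  Sym2.lift ⟨fun A B => (2 * A.card.factorial * B.card.factorial : ℝ) /
      (((S.card : ℝ) - 1) * (S.card.factorial : ℝ)),
    fun A B => by simp only []; ring⟩

/-- Shapley-Owen weight on external coalitions: `t!·(n−s−t)!/(n−s+1)!`. -/
noncomputable def soExt (N S T : Finset α) : ℝ :=
  (T.card.factorial * (N.card - S.card - T.card).factorial : ℝ) /
    ((N.card - S.card + 1).factorial : ℝ)

/-- Shapley-Owen coopetition index (closed formula). -/
noncomputable def C_SO (N : Finset α) (v : Finset α → ℝ) (S : Finset α) : ℝ :=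
  ∑ T ∈ (N \ S).powerset, soExt N S T * ∑ π ∈ Pi2 S, soWeight S π * BI v π T

/-- Banzhaf coopetition index. -/
noncomputable def C_Bz (N : Finset α) (v : Finset α → ℝ) (S : Finset α) : ℝ :=
  (1 / ((2 : ℝ) ^ (N.card - S.card) * ((2 : ℝ) ^ (S.card - 1) - 1))) *
    ∑ T ∈ (N \ S).powerset, ∑ π ∈ Pi2 S, BI v π T

/-- Decisiveness index `D_{p,q}(S)`. -/
noncomputable def decis (N : Finset α) (v : Finset α → ℝ)
    (p : Sym2 (Finset α) → ℝ) (q : Finset α → ℝ) (S : Finset α) : ℝ :=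
  ∑ T ∈ (N \ S).powerset, q T * ∑ π ∈ Pi2 S, p π * |BI v π T|

/-- Banzhaf decisiveness index. -/
noncomputable def D_Bz (N : Finset α) (v : Finset α → ℝ) (S : Finset α) : ℝ :=
  (1 / ((2 : ℝ) ^ (N.card - S.card) * ((2 : ℝ) ^ (S.card - 1) - 1))) *
    ∑ T ∈ (N \ S).powerset, ∑ π ∈ Pi2 S, |BI v π T|

/-- Shapley-Owen decisiveness index. -/
noncomputable def D_SO (N : Finset α) (v : Finset α → ℝ) (S : Finset α) : ℝ :=
  ∑ T ∈ (N \ S).powerset, soExt N S T * ∑ π ∈ Pi2 S, soWeight S π * |BI v π T|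

/-- The apex game on `N` with apex player `a`. -/
noncomputable def apexGame (N : Finset α) (a : α) : Finset α → ℝ :=
  fun S => if (a ∈ S ∧ (S \ {a}).Nonempty) ∨ S = N \ {a} then 1 else 0

lemma BI_mk' (v : Finset α → ℝ) (A B T : Finset α) :
    BI v s(A, B) T = v (A ∪ B ∪ T) - v (A ∪ T) - v (B ∪ T) + v T := rfl

lemma mem_Pi2' {S : Finset α} {π : Sym2 (Finset α)} (h : π ∈ Pi2 S) :
    ∃ Q, Q ⊆ S ∧ Q.Nonempty ∧ Q ≠ S ∧ π = s(Q, S \ Q) := by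
  simp only [Pi2, mem_image, mem_filter, mem_powerset] at h
  obtain ⟨Q, ⟨hQS, hne, hQS'⟩, rfl⟩ := h
  exact ⟨Q, hQS, nonempty_iff_ne_empty.2 hne, hQS', rfl⟩

lemma singleton_mem_Pi2' {S : Finset α} {i : α} (hi : i ∈ S) (hs : 2 ≤ S.card) :
    s({i}, S \ {i}) ∈ Pi2 S := by
  simp only [Pi2, mem_image, mem_filter, mem_powerset]
  refine ⟨{i}, ⟨singleton_subset_iff.2 hi, by simp,
    fun h => by rw [← h, card_singleton] at hs; omega⟩, rfl⟩

/-- with `p` strictly positive on `Π₂(S)` and `q` any probability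
distribution over the subsets of `N \ S`, the coopetition index `C_{p,q}(S)` equals
`-1` iff every player of `S` is critical wrt every `T ⊆ N \ S` with `q(T) > 0`. -/
theorem statement11 (N : Finset α) (v : Finset α → ℝ) (hv : SimpleGame N v)
    (S : Finset α) (hSN : S ⊂ N) (hs : 2 ≤ S.card)
    (p : Sym2 (Finset α) → ℝ) (q : Finset α → ℝ)
    (hp_pos : ∀ π ∈ Pi2 S, 0 < p π) (hp_sum : ∑ π ∈ Pi2 S, p π = 1)
    (hq0 : ∀ T ∈ (N \ S).powerset, 0 ≤ q T) (hq1 : ∑ T ∈ (N \ S).powerset, q T = 1) :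
    coop N v p q S = -1 ↔ ∀ T ⊆ N \ S, 0 < q T → ∀ i ∈ S, Critical v {i} T := by
  have hSsub : S ⊆ N := hSN.subset
  have hb : ∀ U ⊆ N, 0 ≤ v U ∧ v U ≤ 1 := fun U hU => by
    rcases hv.binary U hU with h | h <;> constructor <;> linarith
  -- basic subset facts
  have hsub : ∀ T ⊆ N \ S, ∀ Q ⊆ S, T ⊆ N ∧ Q ∪ T ⊆ N ∧ (S \ Q) ∪ T ⊆ N ∧ S ∪ T ⊆ N := by
    intro T hT Q hQ
    have hTN : T ⊆ N := hT.trans sdiff_subset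
    exact ⟨hTN, union_subset (hQ.trans hSsub) hTN,
      union_subset ((sdiff_subset).trans hSsub) hTN, union_subset hSsub hTN⟩
  -- BI is at least -1
  have hBIge : ∀ T ⊆ N \ S, ∀ π ∈ Pi2 S, -1 ≤ BI v π T := by
    intro T hT π hπ
    obtain ⟨Q, hQS, hQne, hQS', rfl⟩ := mem_Pi2' hπ
    rw [BI_mk', union_sdiff_of_subset hQS]
    obtain ⟨hTN, hQT, hSQT, hST⟩ := hsub T hT Q hQS
    have h1 : v (Q ∪ T) ≤ v (S ∪ T) := hv.mono (union_subset_union_left hQS) hST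
    have h2 := (hb _ hSQT).2
    have h3 := (hb _ hTN).1
    linarith
  -- backward key: if all singletons critical, every BI equals -1
  have hBIeq : ∀ T ⊆ N \ S, (∀ i ∈ S, Critical v {i} T) → ∀ π ∈ Pi2 S, BI v π T = -1 := by
    intro T hT hcrit π hπ
    obtain ⟨Q, hQS, hQne, hQS', rfl⟩ := mem_Pi2' hπ
    obtain ⟨i, hi⟩ := hQne
    obtain ⟨j, hj⟩ : (S \ Q).Nonempty := by
      rw [sdiff_nonempty]; intro h; exact hQS' (subset_antisymm hQS h)
    rw [BI_mk', union_sdiff_of_subset hQS]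
    obtain ⟨hTN, hQT, hSQT, hST⟩ := hsub T hT Q hQS
    have hci := hcrit i (hQS hi)
    have hcj := hcrit j (sdiff_subset hj)
    unfold Critical at hci hcj
    have h1 : v ({i} ∪ T) ≤ v (Q ∪ T) :=
      hv.mono (union_subset_union_left (singleton_subset_iff.2 hi)) hQT
    have h2 : v ({j} ∪ T) ≤ v ((S \ Q) ∪ T) :=
      hv.mono (union_subset_union_left (singleton_subset_iff.2 hj)) hSQT
    have h3 : v (Q ∪ T) ≤ v (S ∪ T) :=
      hv.mono (union_subset_union_left hQS) hST
    have h4 := (hb _ hST).2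
    have h5 := (hb _ hTN).1
    have h6 := (hb _ hSQT).2
    have h7 := (hb _ hQT).2
    linarith
  constructor
  · intro hcoop T hT hqT i hi
    -- attitude ≥ -1 on powerset
    have hAge : ∀ T' ∈ (N \ S).powerset, -1 ≤ attitude v p S T' := by
      intro T' hT'
      rw [mem_powerset] at hT'
      have : (-1 : ℝ) = ∑ π ∈ Pi2 S, p π * (-1) := by
        rw [← Finset.sum_mul, hp_sum]; ring
      rw [this]
      exact Finset.sum_le_sum fun π hπ =>
        mul_le_mul_of_nonneg_left (hBIge T' hT' π hπ) (hp_pos π hπ).le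
    -- sum of nonneg terms equals zero
    have hsum0 : ∑ T' ∈ (N \ S).powerset, q T' * (attitude v p S T' + 1) = 0 := by
      have : ∑ T' ∈ (N \ S).powerset, q T' * (attitude v p S T' + 1)
          = coop N v p q S + ∑ T' ∈ (N \ S).powerset, q T' := by
        rw [coop, ← Finset.sum_add_distrib]
        exact Finset.sum_congr rfl fun T' _ => by ring
      rw [this, hcoop, hq1]; ring
    have hTpow : T ∈ (N \ S).powerset := mem_powerset.2 hT
    have hterm : q T * (attitude v p S T + 1) = 0 :=
      (Finset.sum_eq_zero_iff_of_nonneg fun T' hT' =>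
        mul_nonneg (hq0 T' hT') (by linarith [hAge T' hT'])).1 hsum0 T hTpow
    have hAtt : attitude v p S T = -1 := by
      rcases mul_eq_zero.1 hterm with h | h
      · exact absurd h (ne_of_gt hqT)
      · linarith
    -- all BI equal -1
    have hsum0' : ∑ π ∈ Pi2 S, p π * (BI v π T + 1) = 0 := by
      have : ∑ π ∈ Pi2 S, p π * (BI v π T + 1)
          = attitude v p S T + ∑ π ∈ Pi2 S, p π := by
        rw [attitude, ← Finset.sum_add_distrib]
        exact Finset.sum_congr rfl fun π _ => by ring
      rw [this, hAtt, hp_sum]; ring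
    have hπi : s({i}, S \ {i}) ∈ Pi2 S := singleton_mem_Pi2' hi hs
    have hBIi : BI v s({i}, S \ {i}) T = -1 := by
      have := (Finset.sum_eq_zero_iff_of_nonneg fun π hπ =>
        mul_nonneg (hp_pos π hπ).le (by linarith [hBIge T hT π hπ])).1 hsum0' _ hπi
      rcases mul_eq_zero.1 this with h | h
      · exact absurd h (ne_of_gt (hp_pos _ hπi))
      · linarith
    -- deduce criticality
    rw [BI_mk', union_sdiff_of_subset (singleton_subset_iff.2 hi)] at hBIi
    obtain ⟨hTN, hQT, hSQT, hST⟩ := hsub T hT {i} (singleton_subset_iff.2 hi)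
    have h1 : v ((S \ {i}) ∪ T) ≤ v (S ∪ T) :=
      hv.mono (union_subset_union_left sdiff_subset) hST
    have h2 := (hb _ hQT).2
    have h3 := (hb _ hTN).1
    unfold Critical
    linarith
  · intro hcrit
    have : coop N v p q S = ∑ T ∈ (N \ S).powerset, q T * (-1) := by
      rw [coop]
      refine Finset.sum_congr rfl fun T hT => ?_
      rw [mem_powerset] at hT
      rcases (hq0 T (mem_powerset.2 hT)).eq_or_lt with h | h
      · rw [← h]; ring
      · congr 1
        rw [attitude]
        rw [show (-1 : ℝ) = ∑ π ∈ Pi2 S, p π * (-1) by rw [← Finset.sum_mul, hp_sum]; ring]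
        exact Finset.sum_congr rfl fun π hπ => by
          rw [hBIeq T hT (hcrit T hT h) π hπ]
    rw [this, ← Finset.sum_mul, hq1]; ring
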